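/- Let S be the gluing of affine semigroups S_1 and S_2 with G(S_1) ∩ G(S_2) = dℤ. Then S is uniquely presented if and only if (a) S_1 and S_2 are uniquely presented, and (b) neither d - a nor a - d belongs to S, for every a ∈ Betti(S_1) ∪ Betti(S_2). -/

import Mathlib

open Finset

variable {M : Type*} [AddCommMonoid M] {r : ℕ}

/-- The factorization homomorphism associated to the generating tuple `A`. -/
def phi (A : Fin r → M) (u : Fin r → ℕ) : M := ∑ i, u i • A i

/-- One step of the relation `R`: two factorizations of `a` with nonzero dot product. -/
def step (A : Fin r → M) (a : M) (u v : Fin r → ℕ) : Prop :=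
  phi A u = a ∧ phi A v = a ∧ (∑ i, u i * v i) ≠ 0

/-- The relation `R` on the fiber of `a`: connected by a chain of factorizations with
consecutive nonzero dot products. -/
def Rrel (A : Fin r → M) (a : M) : (Fin r → ℕ) → (Fin r → ℕ) → Prop :=
  Relation.ReflTransGen (step A a)

/-- `a` is a Betti element: its fiber has more than one `R`-class. -/
def IsBetti (A : Fin r → M) (a : M) : Prop :=
  ∃ u v : Fin r → ℕ, phi A u = a ∧ phi A v = a ∧ ¬ Rrel A a u v

/-- `a` is Betti-minimal: a Betti element minimal with respect to `b ≺ a ↔ a - b ∈ S`. -/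
def BettiMinimal (A : Fin r → M) (a : M) : Prop :=
  IsBetti A a ∧ ∀ b : M, IsBetti A b → (∃ c : M, a = b + c) → b = a

/-- `a` has a unique presentation: exactly two factorizations, with disjoint support. -/
def HasUniquePres (A : Fin r → M) (a : M) : Prop :=
  ∃ u v : Fin r → ℕ, u ≠ v ∧ {w : Fin r → ℕ | phi A w = a} = {u, v} ∧
    (∑ i, u i * v i) = 0

/-- The monoid generated by `A` is uniquely presented: every Betti element has exactly two
factorizations, with disjoint support. -/
def UniquelyPresented (A : Fin r → M) : Prop :=
  ∀ a : M, IsBetti A a → HasUniquePres A a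

/-!
Write `S = ⟨A₁ ⊔ A₂⟩` and let `δ₁`, `δ₂` factor `d` in `S₁`, `S₂`. Because `G(S₁) ∩ G(S₂) = dℤ`, the
`A₁`-parts of two factorizations of the same element differ by `k • d` for some `k ∈ ℤ`. Trading
copies of `δ₁` for `δ₂` one at a time then joins the two factorizations by steps sharing an atom,
unless the element is Betti in `S₁` or in `S₂` or equals `d`. The element `d` is Betti, because no
chain leaves the factorizations of `d` with empty `A₂`-part, and projecting chains onto `S₁` shows
`Betti(S₁) ⊆ Betti(S)`. For `a ∈ Betti(S₁)`, the fiber of `a` in `S` is its fiber in `S₁` exactly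
when `a - d ∉ S`. The fiber of `d` is `{(δ₁, 0), (0, δ₂)}` exactly when `δ₁` and `δ₂` are unique,
and by descent to a Betti element below `d` this follows from `d - b ∉ S` for the Betti elements
`b` of `S₁` and `S₂`. The statements about `S₂` follow by swapping the two blocks of generators.
-/

theorem phi_add (A : Fin r → M) (u v : Fin r → ℕ) : phi A (u + v) = phi A u + phi A v := by
  simp [phi, add_smul, sum_add_distrib]

theorem phi_zero (A : Fin r → M) : phi A 0 = 0 := by simp [phi]

theorem phi_nsmul (A : Fin r → M) (k : ℕ) (u : Fin r → ℕ) : phi A (k • u) = k • phi A u := by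
  simp [phi, mul_smul, smul_sum]

theorem mem_closure_range_iff_exists_phi {A : Fin r → M} {x : M} :
    x ∈ AddSubmonoid.closure (Set.range A) ↔ ∃ u, phi A u = x := by
  simp [AddSubmonoid.mem_closure_range_iff_of_fintype, phi, eq_comm]

theorem phi_mem_closure (A : Fin r → M) (u : Fin r → ℕ) :
    phi A u ∈ AddSubmonoid.closure (Set.range A) :=
  mem_closure_range_iff_exists_phi.2 ⟨u, rfl⟩

theorem sum_mul_ne_zero_iff {ι : Type*} [Fintype ι] {u v : ι → ℕ} :
    (∑ i, u i * v i) ≠ 0 ↔ ∃ i, u i ≠ 0 ∧ v i ≠ 0 := by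
  simp [sum_eq_zero_iff, not_or]

theorem step_iff {A : Fin r → M} {a : M} {u v : Fin r → ℕ} :
    step A a u v ↔ phi A u = a ∧ phi A v = a ∧ ∃ i, u i ≠ 0 ∧ v i ≠ 0 := by
  rw [step, sum_mul_ne_zero_iff]

theorem exists_apply_ne_zero {ι : Type*} {u : ι → ℕ} (h : u ≠ 0) : ∃ i, u i ≠ 0 :=
  Function.ne_iff.1 h

theorem ne_zero_of_phi_eq {A : Fin r → M} {u : Fin r → ℕ} {a : M} (h : phi A u = a) (ha : a ≠ 0) :
    u ≠ 0 := by
  rintro rfl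
  exact ha (h.symm.trans (phi_zero A))

section Rrel

variable {A : Fin r → M} {a : M} {u v : Fin r → ℕ}

theorem step.symm (h : step A a u v) : step A a v u := by
  obtain ⟨hu, hv, i, hui, hvi⟩ := step_iff.1 h
  exact step_iff.2 ⟨hv, hu, i, hvi, hui⟩

theorem Rrel.symm (h : Rrel A a u v) : Rrel A a v u := by
  induction h with
  | refl => exact .refl
  | tail _ hs ih => exact .head hs.symm ih

theorem rrel_of_not_isBetti (ha : ¬ IsBetti A a) (hu : phi A u = a) (hv : phi A v = a) :
    Rrel A a u v := by
  by_contra h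
  exact ha ⟨u, v, hu, hv, h⟩

theorem Rrel.exists_step_ne (h : Rrel A a u v) (huv : u ≠ v) : ∃ q, step A a u q ∧ u ≠ q := by
  induction h using Relation.ReflTransGen.head_induction_on with
  | refl => exact absurd rfl huv
  | @head u q hstep _ ih =>
    by_cases huq : u = q
    · subst huq
      exact ih huv
    · exact ⟨q, hstep, huq⟩

end Rrel

theorem single_add_sub_single {u : Fin r → ℕ} {i : Fin r} (hi : u i ≠ 0) :
    Pi.single i 1 + (u - Pi.single i 1) = u := by
  ext j
  by_cases hj : j = i
  · subst hj
    simp only [Pi.add_apply, Pi.sub_apply, Pi.single_eq_same]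
    omega
  · simp [hj]

theorem phi_eq_add_phi_sub_single (A : Fin r → M) {u : Fin r → ℕ} {i : Fin r} (hi : u i ≠ 0) :
    phi A u = A i + phi A (u - Pi.single i 1) := by
  conv_lhs => rw [← single_add_sub_single hi]
  rw [phi_add]
  congr 1
  simp [phi]

/-- If `phi B u` is not Betti, `u` shares an atom `B i` with another factorization; removing it
gives a shorter pair of distinct factorizations. -/
theorem exists_isBetti_add_of_phi_eq {N : Type*} [AddCancelCommMonoid N] {B : Fin r → N}
    {u v : Fin r → ℕ} (h : phi B u = phi B v) (huv : u ≠ v) :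
    ∃ b w, IsBetti B b ∧ b + phi B w = phi B u := by
  induction hm : ∑ i, u i using Nat.strong_induction_on generalizing u v with
  | _ m ih =>
  by_cases hb : IsBetti B (phi B u)
  · exact ⟨_, 0, hb, by rw [phi_zero, add_zero]⟩
  obtain ⟨q, hstep, huq⟩ := (rrel_of_not_isBetti hb rfl h.symm).exists_step_ne huv
  obtain ⟨-, hq, i, hui, hqi⟩ := step_iff.1 hstep
  have hu := phi_eq_add_phi_sub_single B hui
  have hfac : phi B (u - Pi.single i 1) = phi B (q - Pi.single i 1) :=
    add_left_cancel (hu.symm.trans (hq.symm.trans (phi_eq_add_phi_sub_single B hqi)))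
  have hne : u - Pi.single i 1 ≠ q - Pi.single i 1 := fun h' => huq <| by
    rw [← single_add_sub_single hui, h', single_add_sub_single hqi]
  have hlt : ∑ j, (u - Pi.single i 1 : Fin r → ℕ) j < m := by
    have := congrArg (fun w => ∑ j, w j) (single_add_sub_single hui)
    simp only [Pi.add_apply, sum_add_distrib, sum_pi_single', mem_univ, if_true] at this
    omega
  obtain ⟨b, w, hb, hbw⟩ := ih _ hlt hfac hne rfl
  refine ⟨b, w + Pi.single i 1, hb, ?_⟩
  rw [phi_add, ← add_assoc, hbw, hu, add_comm]
  simp [phi]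

theorem eq_of_phi_eq_of_forall_isBetti {N : Type*} [AddCancelCommMonoid N] {B : Fin r → N} {x : N}
    (hB : ∀ b w, IsBetti B b → b + phi B w ≠ x) {u v : Fin r → ℕ} (hu : phi B u = x)
    (hv : phi B v = x) : u = v := by
  by_contra huv
  obtain ⟨b, w, hb, hbw⟩ := exists_isBetti_add_of_phi_eq (hu.trans hv.symm) huv
  exact hB b w hb (hbw.trans hu)

theorem hasUniquePres_iff {A : Fin r → M} {a : M} :
    HasUniquePres A a ↔ ∃ u v : Fin r → ℕ, u ≠ v ∧ (∀ w, phi A w = a ↔ w = u ∨ w = v) ∧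
      (∑ i, u i * v i) = 0 := by
  simp only [HasUniquePres, Set.ext_iff, Set.mem_ofPred_eq, Set.mem_insert_iff,
    Set.mem_singleton_iff]

theorem HasUniquePres.phi_eq_iff {A : Fin r → M} {a : M} {u v : Fin r → ℕ}
    (h : HasUniquePres A a) (hu : phi A u = a) (hv : phi A v = a) (huv : u ≠ v) :
    (∀ w, phi A w = a ↔ w = u ∨ w = v) ∧ (∑ i, u i * v i) = 0 := by
  obtain ⟨p, q, -, hfib, hdot⟩ := hasUniquePres_iff.1 h
  rcases (hfib u).1 hu with rfl | rfl <;> rcases (hfib v).1 hv with rfl | rfl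
  · exact absurd rfl huv
  · exact ⟨hfib, hdot⟩
  · exact ⟨fun w => (hfib w).trans or_comm, by simpa only [mul_comm] using hdot⟩
  · exact absurd rfl huv

section Reindex

variable {s : ℕ} (e : Fin s ≃ Fin r) {A : Fin r → M} {a : M}

theorem phi_comp_equiv (A : Fin r → M) (u : Fin s → ℕ) : phi (A ∘ e) u = phi A (u ∘ e.symm) := by
  simp only [phi, Function.comp_apply]
  rw [← e.sum_comp]
  simp

theorem Rrel.comp_equiv_symm {u v : Fin s → ℕ} (h : Rrel (A ∘ e) a u v) :
    Rrel A a (u ∘ e.symm) (v ∘ e.symm) := by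
  refine Relation.ReflTransGen.lift (· ∘ e.symm) (fun p q hpq => ?_) _ _ h
  obtain ⟨hp, hq, i, hpi, hqi⟩ := step_iff.1 hpq
  exact step_iff.2 ⟨by rwa [← phi_comp_equiv], by rwa [← phi_comp_equiv], e i,
    by simpa using hpi, by simpa using hqi⟩

theorem IsBetti.comp_equiv (h : IsBetti A a) : IsBetti (A ∘ e) a := by
  obtain ⟨u, v, hu, hv, huv⟩ := h
  refine ⟨u ∘ e, v ∘ e, by simpa [phi_comp_equiv, Function.comp_assoc],
    by simpa [phi_comp_equiv, Function.comp_assoc], fun h' => huv ?_⟩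
  simpa [Function.comp_assoc] using h'.comp_equiv_symm e

theorem HasUniquePres.comp_equiv (h : HasUniquePres A a) : HasUniquePres (A ∘ e) a := by
  obtain ⟨u, v, huv, hfib, hdot⟩ := hasUniquePres_iff.1 h
  refine hasUniquePres_iff.2 ⟨u ∘ e, v ∘ e, fun h' => huv (e.surjective.injective_comp_right h'),
    fun w => ?_, (e.sum_comp fun i => u i * v i).trans hdot⟩
  rw [phi_comp_equiv, hfib, Equiv.comp_symm_eq, Equiv.comp_symm_eq]

theorem UniquelyPresented.comp_equiv (h : UniquelyPresented A) : UniquelyPresented (A ∘ e) :=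
  fun a ha => (h a (by simpa [Function.comp_assoc] using ha.comp_equiv e.symm)).comp_equiv e

theorem uniquelyPresented_comp_equiv_iff : UniquelyPresented (A ∘ e) ↔ UniquelyPresented A :=
  ⟨fun h => by simpa [Function.comp_assoc] using h.comp_equiv e.symm, fun h => h.comp_equiv e⟩

end Reindex

section Append

variable {r₁ r₂ : ℕ}

theorem exists_eq_append {α : Type*} (z : Fin (r₁ + r₂) → α) : ∃ x y, Fin.append x y = z :=
  ⟨_, _, Fin.append_castAdd_natAdd⟩

theorem append_inj {α : Type*} {x x' : Fin r₁ → α} {y y' : Fin r₂ → α} :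
    Fin.append x y = Fin.append x' y' ↔ x = x' ∧ y = y' :=
  ((Fin.appendEquiv r₁ r₂).injective.eq_iff (a := (x, y)) (b := (x', y'))).trans Prod.ext_iff

theorem append_zero_zero {α : Type*} [Zero α] :
    Fin.append (0 : Fin r₁ → α) (0 : Fin r₂ → α) = 0 := by
  ext i
  cases i using Fin.addCases <;> simp

theorem append_comp_finAddFlip {α : Type*} (x : Fin r₁ → α) (y : Fin r₂ → α) :
    Fin.append x y ∘ finAddFlip = Fin.append y x := by
  ext i
  cases i using Fin.addCases <;> simp [finAddFlip_apply_castAdd, finAddFlip_apply_natAdd]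

theorem phi_append (A₁ : Fin r₁ → M) (A₂ : Fin r₂ → M) (x : Fin r₁ → ℕ) (y : Fin r₂ → ℕ) :
    phi (Fin.append A₁ A₂) (Fin.append x y) = phi A₁ x + phi A₂ y := by
  simp [phi, Fin.sum_univ_add]

theorem phi_append_zero (A₁ : Fin r₁ → M) (A₂ : Fin r₂ → M) (x : Fin r₁ → ℕ) :
    phi (Fin.append A₁ A₂) (Fin.append x 0) = phi A₁ x := by
  rw [phi_append, phi_zero, add_zero]

theorem phi_zero_append (A₁ : Fin r₁ → M) (A₂ : Fin r₂ → M) (y : Fin r₂ → ℕ) :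
    phi (Fin.append A₁ A₂) (Fin.append 0 y) = phi A₂ y := by
  rw [phi_append, phi_zero, zero_add]

theorem sum_mul_append (x x' : Fin r₁ → ℕ) (y y' : Fin r₂ → ℕ) :
    (∑ i, Fin.append x y i * Fin.append x' y' i) = (∑ i, x i * x' i) + ∑ j, y j * y' j := by
  simp [Fin.sum_univ_add]

theorem range_append_comm {α : Type*} (A₁ : Fin r₁ → α) (A₂ : Fin r₂ → α) :
    Set.range (Fin.append A₂ A₁) = Set.range (Fin.append A₁ A₂) := by
  rw [← append_comp_finAddFlip, EquivLike.range_comp]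

theorem uniquelyPresented_append_comm {A₁ : Fin r₁ → M} {A₂ : Fin r₂ → M} :
    UniquelyPresented (Fin.append A₂ A₁) ↔ UniquelyPresented (Fin.append A₁ A₂) := by
  rw [← append_comp_finAddFlip, uniquelyPresented_comp_equiv_iff]

theorem HasUniquePres.of_append_comm {A₁ : Fin r₁ → M} {A₂ : Fin r₂ → M} {a : M}
    (h : HasUniquePres (Fin.append A₂ A₁) a) : HasUniquePres (Fin.append A₁ A₂) a := by
  rw [← append_comp_finAddFlip] at h
  simpa [Function.comp_assoc] using h.comp_equiv finAddFlip.symm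

theorem phi_left_mem_closure (A₁ : Fin r₁ → M) (A₂ : Fin r₂ → M) (x : Fin r₁ → ℕ) :
    phi A₁ x ∈ AddSubmonoid.closure (Set.range (Fin.append A₁ A₂)) :=
  phi_append_zero A₁ A₂ x ▸ phi_mem_closure _ _

theorem phi_right_mem_closure (A₁ : Fin r₁ → M) (A₂ : Fin r₂ → M) (y : Fin r₂ → ℕ) :
    phi A₂ y ∈ AddSubmonoid.closure (Set.range (Fin.append A₁ A₂)) :=
  phi_zero_append A₁ A₂ y ▸ phi_mem_closure _ _

variable {A₁ : Fin r₁ → M} {A₂ : Fin r₂ → M} {a : M}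

theorem step_append_iff {x x' : Fin r₁ → ℕ} {y y' : Fin r₂ → ℕ} :
    step (Fin.append A₁ A₂) a (Fin.append x y) (Fin.append x' y') ↔
      phi (Fin.append A₁ A₂) (Fin.append x y) = a ∧
      phi (Fin.append A₁ A₂) (Fin.append x' y') = a ∧
      ((∃ i, x i ≠ 0 ∧ x' i ≠ 0) ∨ ∃ j, y j ≠ 0 ∧ y' j ≠ 0) := by
  rw [step, sum_mul_append, Ne, Nat.add_eq_zero_iff, not_and_or, ← Ne, ← Ne,
    sum_mul_ne_zero_iff, sum_mul_ne_zero_iff]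

theorem Rrel.append_zero {x x' : Fin r₁ → ℕ} (h : Rrel A₁ a x x') :
    Rrel (Fin.append A₁ A₂) a (Fin.append x 0) (Fin.append x' 0) := by
  refine Relation.ReflTransGen.lift (Fin.append · 0) (fun u v huv => ?_) _ _ h
  obtain ⟨hu, hv, hc⟩ := step_iff.1 huv
  exact step_append_iff.2 ⟨by rwa [phi_append_zero], by rwa [phi_append_zero], .inl hc⟩

theorem Rrel.zero_append {y y' : Fin r₂ → ℕ} (h : Rrel A₂ a y y') :
    Rrel (Fin.append A₁ A₂) a (Fin.append 0 y) (Fin.append 0 y') := by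
  refine Relation.ReflTransGen.lift (Fin.append 0 ·) (fun u v huv => ?_) _ _ h
  obtain ⟨hu, hv, hc⟩ := step_iff.1 huv
  exact step_append_iff.2 ⟨by rwa [phi_zero_append], by rwa [phi_zero_append], .inr hc⟩

theorem rrel_append_left {x x' : Fin r₁ → ℕ} {y : Fin r₂ → ℕ} (ha : y = 0 → ¬ IsBetti A₁ a)
    (h : phi (Fin.append A₁ A₂) (Fin.append x y) = a)
    (h' : phi (Fin.append A₁ A₂) (Fin.append x' y) = a) :
    Rrel (Fin.append A₁ A₂) a (Fin.append x y) (Fin.append x' y) := by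
  rcases eq_or_ne y 0 with rfl | hy
  · rw [phi_append_zero] at h h'
    exact (rrel_of_not_isBetti (ha rfl) h h').append_zero
  · obtain ⟨j, hj⟩ := exists_apply_ne_zero hy
    exact .single (step_append_iff.2 ⟨h, h', .inr ⟨j, hj, hj⟩⟩)

theorem rrel_append_right {x : Fin r₁ → ℕ} {y y' : Fin r₂ → ℕ} (ha : x = 0 → ¬ IsBetti A₂ a)
    (h : phi (Fin.append A₁ A₂) (Fin.append x y) = a)
    (h' : phi (Fin.append A₁ A₂) (Fin.append x y') = a) :
    Rrel (Fin.append A₁ A₂) a (Fin.append x y) (Fin.append x y') := by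
  rcases eq_or_ne x 0 with rfl | hx
  · rw [phi_zero_append] at h h'
    exact (rrel_of_not_isBetti (ha rfl) h h').zero_append
  · obtain ⟨i, hi⟩ := exists_apply_ne_zero hx
    exact .single (step_append_iff.2 ⟨h, h', .inl ⟨i, hi, hi⟩⟩)

end Append

section Gluing

variable {G : Type*} [AddCommGroup G]

theorem eq_zero_of_phi_eq_zero {A : Fin r → G} (hA : ∀ i, A i ≠ 0)
    (hred : ∀ x ∈ AddSubmonoid.closure (Set.range A), -x ∈ AddSubmonoid.closure (Set.range A) →
      x = 0) {t : Fin r → ℕ} (ht : phi A t = 0) : t = 0 := by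
  by_contra h
  obtain ⟨i, hi⟩ := exists_apply_ne_zero h
  have hneg : -A i = phi A (t - Pi.single i 1) :=
    neg_eq_of_add_eq_zero_right ((phi_eq_add_phi_sub_single A hi).symm.trans ht)
  exact hA i (hred _ (AddSubmonoid.subset_closure ⟨i, rfl⟩) (hneg ▸ phi_mem_closure _ _))

theorem phi_mem_addSubgroupClosure (A : Fin r → G) (u : Fin r → ℕ) :
    phi A u ∈ AddSubgroup.closure (Set.range A) :=
  (AddSubmonoid.closure_le (S := (AddSubgroup.closure _).toAddSubmonoid)).2
    AddSubgroup.subset_closure (phi_mem_closure A u)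

variable {r₁ r₂ : ℕ}

/-- The first field stands in for the standing assumptions that `⟨A₁ ⊔ A₂⟩` is reduced and that no
generator is zero. -/
structure IsGluing (A₁ : Fin r₁ → G) (A₂ : Fin r₂ → G) (d : G) : Prop where
  eq_zero_of_phi_eq_zero : ∀ t, phi (Fin.append A₁ A₂) t = 0 → t = 0
  ne_zero : d ≠ 0
  mem_left : d ∈ AddSubmonoid.closure (Set.range A₁)
  mem_right : d ∈ AddSubmonoid.closure (Set.range A₂)
  inf_eq : AddSubgroup.closure (Set.range A₁) ⊓ AddSubgroup.closure (Set.range A₂) =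
    AddSubgroup.zmultiples d

namespace IsGluing

variable {A₁ : Fin r₁ → G} {A₂ : Fin r₂ → G} {d a : G}

theorem symm (hG : IsGluing A₁ A₂ d) : IsGluing A₂ A₁ d where
  eq_zero_of_phi_eq_zero t ht := by
    obtain ⟨y, x, rfl⟩ := exists_eq_append t
    rw [phi_append, add_comm, ← phi_append] at ht
    obtain ⟨rfl, rfl⟩ := append_inj.1 ((hG.eq_zero_of_phi_eq_zero _ ht).trans append_zero_zero.symm)
    exact append_zero_zero
  ne_zero := hG.ne_zero
  mem_left := hG.mem_right
  mem_right := hG.mem_left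
  inf_eq := by rw [inf_comm, hG.inf_eq]

theorem phi_left_eq_zero (hG : IsGluing A₁ A₂ d) {x : Fin r₁ → ℕ} (hx : phi A₁ x = 0) : x = 0 :=
  (append_inj.1 ((hG.eq_zero_of_phi_eq_zero (Fin.append x 0)
    (by rw [phi_append_zero, hx])).trans append_zero_zero.symm)).1

theorem phi_right_eq_zero (hG : IsGluing A₁ A₂ d) {y : Fin r₂ → ℕ} (hy : phi A₂ y = 0) : y = 0 :=
  hG.symm.phi_left_eq_zero hy

theorem exists_phi_left_eq (hG : IsGluing A₁ A₂ d) : ∃ δ, phi A₁ δ = d :=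
  mem_closure_range_iff_exists_phi.1 hG.mem_left

theorem exists_phi_right_eq (hG : IsGluing A₁ A₂ d) : ∃ δ, phi A₂ δ = d :=
  hG.symm.exists_phi_left_eq

theorem nsmul_inj (hG : IsGluing A₁ A₂ d) {k k' : ℕ} (h : k • d = k' • d) : k = k' := by
  wlog hle : k ≤ k' generalizing k k'
  · exact (this h.symm (le_of_not_ge hle)).symm
  obtain ⟨m, rfl⟩ := Nat.exists_eq_add_of_le hle
  obtain ⟨δ, hδ⟩ := hG.exists_phi_left_eq
  rw [add_nsmul, left_eq_add] at h
  rcases smul_eq_zero.1 (hG.phi_left_eq_zero (by rw [phi_nsmul, hδ, h])) with rfl | hδ0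
  · rfl
  · exact absurd hδ0 (ne_zero_of_phi_eq hδ hG.ne_zero)

theorem exists_zsmul_of_phi_eq (hG : IsGluing A₁ A₂ d) {x x' : Fin r₁ → ℕ} {y y' : Fin r₂ → ℕ}
    (h : phi (Fin.append A₁ A₂) (Fin.append x y) = phi (Fin.append A₁ A₂) (Fin.append x' y')) :
    ∃ k : ℤ, phi A₁ x = phi A₁ x' + k • d := by
  rw [phi_append, phi_append] at h
  have hmem : phi A₁ x - phi A₁ x' ∈ AddSubgroup.zmultiples d := by
    rw [← hG.inf_eq]
    refine AddSubgroup.mem_inf.2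
      ⟨sub_mem (phi_mem_addSubgroupClosure _ _) (phi_mem_addSubgroupClosure _ _), ?_⟩
    rw [sub_eq_sub_iff_add_eq_add.2 (h.trans (add_comm _ _))]
    exact sub_mem (phi_mem_addSubgroupClosure _ _) (phi_mem_addSubgroupClosure _ _)
  obtain ⟨k, hk⟩ := AddSubgroup.mem_zmultiples_iff.1 hmem
  exact ⟨k, by rw [hk]; abel⟩

theorem nonneg_of_phi_right_eq_zsmul (hG : IsGluing A₁ A₂ d) {y : Fin r₂ → ℕ} {k : ℤ}
    (hy : phi A₂ y = k • d) : 0 ≤ k := by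
  by_contra! hk
  obtain ⟨δ, hδ⟩ := hG.exists_phi_left_eq
  obtain ⟨n, rfl⟩ := Int.exists_eq_neg_ofNat hk.le
  have h0 := hG.eq_zero_of_phi_eq_zero (Fin.append (n • δ) y)
    (by rw [phi_append, phi_nsmul, hδ, hy, neg_smul, natCast_zsmul, add_neg_cancel])
  rcases smul_eq_zero.1 (append_inj.1 (h0.trans append_zero_zero.symm)).1 with rfl | hδ0
  · simp at hk
  · exact ne_zero_of_phi_eq hδ hG.ne_zero hδ0

theorem exists_nsmul_of_phi_eq (hG : IsGluing A₁ A₂ d) {u₀ : Fin r₁ → ℕ} (hu₀ : phi A₁ u₀ = a)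
    {x : Fin r₁ → ℕ} {y : Fin r₂ → ℕ} (h : phi (Fin.append A₁ A₂) (Fin.append x y) = a) :
    ∃ k : ℕ, phi A₂ y = k • d ∧ phi A₁ x + k • d = a := by
  obtain ⟨k, hk⟩ := hG.exists_zsmul_of_phi_eq (x' := u₀) (y' := 0)
    (by rw [h, phi_append_zero, hu₀])
  rw [phi_append] at h
  rw [hu₀] at hk
  have hy : phi A₂ y = (-k) • d := by
    rw [neg_smul, eq_sub_of_add_eq' h, hk]
    abel
  obtain ⟨n, hn⟩ := Int.eq_ofNat_of_zero_le (hG.nonneg_of_phi_right_eq_zsmul hy)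
  refine ⟨n, by rw [hy, hn, natCast_zsmul], ?_⟩
  rw [hk, ← natCast_zsmul, ← hn, neg_smul]
  abel

theorem cases_of_phi_eq_d (hG : IsGluing A₁ A₂ d) {x : Fin r₁ → ℕ} {y : Fin r₂ → ℕ}
    (h : phi (Fin.append A₁ A₂) (Fin.append x y) = d) :
    (y = 0 ∧ phi A₁ x = d) ∨ (x = 0 ∧ phi A₂ y = d) := by
  obtain ⟨δ, hδ⟩ := hG.exists_phi_left_eq
  obtain ⟨k, hy, hx⟩ := hG.exists_nsmul_of_phi_eq hδ h
  match k with
  | 0 =>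
    rw [zero_smul] at hy hx
    exact .inl ⟨hG.phi_right_eq_zero hy, by rwa [add_zero] at hx⟩
  | 1 =>
    rw [one_smul] at hy hx
    exact .inr ⟨hG.phi_left_eq_zero (by rwa [add_eq_right] at hx), hy⟩
  | k + 2 =>
    rw [succ_nsmul, ← add_assoc, add_eq_right] at hx
    have h0 := hG.phi_left_eq_zero (x := x + (k + 1) • δ) (by rw [phi_add, phi_nsmul, hδ, hx])
    rcases smul_eq_zero.1 (add_eq_zero.1 h0).2 with hk | hδ0
    · exact absurd hk k.succ_ne_zero
    · exact absurd hδ0 (ne_zero_of_phi_eq hδ hG.ne_zero)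

theorem exists_eq_append_zero_of_rrel_d (hG : IsGluing A₁ A₂ d) {x : Fin r₁ → ℕ} {z : Fin (r₁ + r₂) → ℕ}
    (h : Rrel (Fin.append A₁ A₂) d (Fin.append x 0) z) : ∃ x', z = Fin.append x' 0 := by
  induction h with
  | refl => exact ⟨x, rfl⟩
  | @tail b c _ hs ih =>
    obtain ⟨xb, rfl⟩ := ih
    obtain ⟨xc, yc, rfl⟩ := exists_eq_append c
    obtain ⟨-, hc, hshare⟩ := step_append_iff.1 hs
    rcases hG.cases_of_phi_eq_d hc with ⟨rfl, -⟩ | ⟨rfl, -⟩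
    · exact ⟨xc, rfl⟩
    · simp at hshare

theorem isBetti_d (hG : IsGluing A₁ A₂ d) : IsBetti (Fin.append A₁ A₂) d := by
  obtain ⟨δ₁, hδ₁⟩ := hG.exists_phi_left_eq
  obtain ⟨δ₂, hδ₂⟩ := hG.exists_phi_right_eq
  refine ⟨Fin.append δ₁ 0, Fin.append 0 δ₂, by rw [phi_append_zero, hδ₁],
    by rw [phi_zero_append, hδ₂], fun h => ?_⟩
  obtain ⟨x', hx'⟩ := hG.exists_eq_append_zero_of_rrel_d h
  exact ne_zero_of_phi_eq hδ₂ hG.ne_zero (append_inj.1 hx').2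

/-- Induction on `k`: the factorization `(x, y)` is moved to `(x' + (k + 1) • δ₁, y)` inside its
`R`-class, then `δ₁` is traded for `δ₂`; this last step shares an atom unless `a = d`. -/
theorem rrel_of_phi_left_eq_add_nsmul (hG : IsGluing A₁ A₂ d) (h₁ : ¬ IsBetti A₁ a)
    (h₂ : ¬ IsBetti A₂ a) (had : a ≠ d) {x' : Fin r₁ → ℕ} {y' : Fin r₂ → ℕ}
    (hz' : phi (Fin.append A₁ A₂) (Fin.append x' y') = a) (k : ℕ) :
    ∀ {x : Fin r₁ → ℕ} {y : Fin r₂ → ℕ}, phi (Fin.append A₁ A₂) (Fin.append x y) = a →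
      phi A₁ x = phi A₁ x' + k • d →
      Rrel (Fin.append A₁ A₂) a (Fin.append x y) (Fin.append x' y') := by
  obtain ⟨δ₁, hδ₁⟩ := hG.exists_phi_left_eq
  obtain ⟨δ₂, hδ₂⟩ := hG.exists_phi_right_eq
  induction k with
  | zero =>
    intro x y hz hx
    have hmid : phi (Fin.append A₁ A₂) (Fin.append x' y) = a := by
      rwa [phi_append, hx, zero_smul, add_zero, ← phi_append] at hz
    exact (rrel_append_left (fun _ => h₁) hz hmid).trans (rrel_append_right (fun _ => h₂) hmid hz')
  | succ k ih =>
    intro x y hz hx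
    have hu : phi A₁ (x' + k • δ₁) = phi A₁ x' + k • d := by rw [phi_add, phi_nsmul, hδ₁]
    generalize x' + k • δ₁ = u' at hu
    have hp : phi (Fin.append A₁ A₂) (Fin.append (u' + δ₁) y) = a := by
      rw [phi_append, phi_add, hu, hδ₁, ← hz, phi_append, hx, succ_nsmul]
      abel
    have hw : phi (Fin.append A₁ A₂) (Fin.append u' (y + δ₂)) = a := by
      rw [← hp, phi_append, phi_append, phi_add, phi_add, hδ₁, hδ₂]
      abel
    refine ((rrel_append_left (fun _ => h₁) hz hp).tail (step_append_iff.2 ⟨hp, hw, ?_⟩)).trans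
      (ih hw hu)
    rcases eq_or_ne u' 0 with hu0 | hu0
    · rcases eq_or_ne y 0 with rfl | hy
      · refine absurd ?_ had
        rw [← hw, hu0, zero_add, phi_zero_append, hδ₂]
      · obtain ⟨j, hj⟩ := exists_apply_ne_zero hy
        refine .inr ⟨j, hj, ?_⟩
        simp only [Pi.add_apply]
        omega
    · obtain ⟨i, hi⟩ := exists_apply_ne_zero hu0
      refine .inl ⟨i, ?_, hi⟩
      simp only [Pi.add_apply]
      omega

theorem rrel_of_not_isBetti (hG : IsGluing A₁ A₂ d) (h₁ : ¬ IsBetti A₁ a) (h₂ : ¬ IsBetti A₂ a)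
    (had : a ≠ d) {z z' : Fin (r₁ + r₂) → ℕ} (hz : phi (Fin.append A₁ A₂) z = a)
    (hz' : phi (Fin.append A₁ A₂) z' = a) : Rrel (Fin.append A₁ A₂) a z z' := by
  obtain ⟨x, y, rfl⟩ := exists_eq_append z
  obtain ⟨x', y', rfl⟩ := exists_eq_append z'
  obtain ⟨k, hk⟩ := hG.exists_zsmul_of_phi_eq (hz.trans hz'.symm)
  obtain ⟨n, rfl | rfl⟩ := Int.eq_nat_or_neg k
  · exact hG.rrel_of_phi_left_eq_add_nsmul h₁ h₂ had hz' n hz (by rwa [natCast_zsmul] at hk)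
  · refine (hG.rrel_of_phi_left_eq_add_nsmul h₁ h₂ had hz n hz' ?_).symm
    rw [hk, neg_smul, natCast_zsmul]
    abel

theorem isBetti_cases (hG : IsGluing A₁ A₂ d) (ha : IsBetti (Fin.append A₁ A₂) a) :
    IsBetti A₁ a ∨ IsBetti A₂ a ∨ a = d := by
  by_contra! h
  obtain ⟨z, z', hz, hz', hzz'⟩ := ha
  exact hzz' (hG.rrel_of_not_isBetti h.1 h.2.1 h.2.2 hz hz')

/-- Projection of an `R`-chain onto `A₁`: the `A₂`-part `k • d` of each factorization of
`a ∈ ⟨A₁⟩` is replaced by `k • δ`. -/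
theorem step_add_nsmul (hG : IsGluing A₁ A₂ d) {δ : Fin r₁ → ℕ} (hδ : phi A₁ δ = d)
    {x x' : Fin r₁ → ℕ} {y y' : Fin r₂ → ℕ} {k k' : ℕ}
    (hs : step (Fin.append A₁ A₂) a (Fin.append x y) (Fin.append x' y'))
    (hk : phi A₂ y = k • d) (hk' : phi A₂ y' = k' • d) :
    step A₁ a (x + k • δ) (x' + k' • δ) := by
  obtain ⟨h, h', hshare⟩ := step_append_iff.1 hs
  rw [phi_append] at h h'
  refine step_iff.2 ⟨by rw [phi_add, phi_nsmul, hδ, ← hk, h],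
    by rw [phi_add, phi_nsmul, hδ, ← hk', h'], ?_⟩
  rcases hshare with ⟨i, hi, hi'⟩ | ⟨j, hj, hj'⟩
  · exact ⟨i, by simp [hi], by simp [hi']⟩
  · have hpos : ∀ {y : Fin r₂ → ℕ} {k : ℕ}, phi A₂ y = k • d → y j ≠ 0 → k ≠ 0 := by
      rintro y k hy hyj rfl
      exact hyj (congrFun (hG.phi_right_eq_zero (by rw [hy, zero_smul])) j)
    obtain ⟨i, hi⟩ := exists_apply_ne_zero (ne_zero_of_phi_eq hδ hG.ne_zero)
    exact ⟨i, by simp [hpos hk hj, hi], by simp [hpos hk' hj', hi]⟩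

theorem rrel_add_nsmul_of_rrel (hG : IsGluing A₁ A₂ d) {δ : Fin r₁ → ℕ} (hδ : phi A₁ δ = d)
    {u₀ : Fin r₁ → ℕ} (hu₀ : phi A₁ u₀ = a) {x : Fin r₁ → ℕ} {y : Fin r₂ → ℕ}
    {z' : Fin (r₁ + r₂) → ℕ} (h : Rrel (Fin.append A₁ A₂) a (Fin.append x y) z') {k : ℕ}
    (hk : phi A₂ y = k • d) {x' : Fin r₁ → ℕ} {y' : Fin r₂ → ℕ} (hz' : z' = Fin.append x' y')
    {k' : ℕ} (hk' : phi A₂ y' = k' • d) : Rrel A₁ a (x + k • δ) (x' + k' • δ) := by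
  induction h generalizing x' y' k' with
  | refl =>
    obtain ⟨rfl, rfl⟩ := append_inj.1 hz'
    rw [hG.nsmul_inj (hk.symm.trans hk')]
    exact .refl
  | @tail b c _ hs ih =>
    subst hz'
    obtain ⟨xb, yb, rfl⟩ := exists_eq_append b
    obtain ⟨kb, hkb, -⟩ := hG.exists_nsmul_of_phi_eq hu₀ (step_append_iff.1 hs).1
    exact (ih rfl hkb).tail (hG.step_add_nsmul hδ hs hkb hk')

theorem phi_eq_iff_of_not_rrel_left (hG : IsGluing A₁ A₂ d)
    (hUP : UniquelyPresented (Fin.append A₁ A₂)) {u v : Fin r₁ → ℕ} (hu : phi A₁ u = a)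
    (hv : phi A₁ v = a) (huv : ¬ Rrel A₁ a u v) :
    (∀ w, phi (Fin.append A₁ A₂) w = a ↔ w = Fin.append u 0 ∨ w = Fin.append v 0) ∧
      (∑ i, u i * v i) = 0 := by
  obtain ⟨δ, hδ⟩ := hG.exists_phi_left_eq
  have hu' : phi (Fin.append A₁ A₂) (Fin.append u 0) = a := by rw [phi_append_zero, hu]
  have hv' : phi (Fin.append A₁ A₂) (Fin.append v 0) = a := by rw [phi_append_zero, hv]
  have hS : ¬ Rrel (Fin.append A₁ A₂) a (Fin.append u 0) (Fin.append v 0) := fun h => huv <| by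
    simpa using hG.rrel_add_nsmul_of_rrel hδ hu h (k := 0) (by rw [phi_zero, zero_smul]) rfl
      (k' := 0) (by rw [phi_zero, zero_smul])
  obtain ⟨hfib, hdot⟩ := (hUP a ⟨_, _, hu', hv', hS⟩).phi_eq_iff hu' hv' fun h => hS (h ▸ .refl)
  exact ⟨hfib, by simpa [sum_mul_append] using hdot⟩

theorem uniquelyPresented_left (hG : IsGluing A₁ A₂ d)
    (hUP : UniquelyPresented (Fin.append A₁ A₂)) : UniquelyPresented A₁ := by
  rintro a ⟨u, v, hu, hv, huv⟩
  obtain ⟨hfib, hdot⟩ := hG.phi_eq_iff_of_not_rrel_left hUP hu hv huv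
  refine hasUniquePres_iff.2 ⟨u, v, fun h => huv (h ▸ .refl), fun w => ?_, hdot⟩
  simpa [phi_append_zero, append_inj] using hfib (Fin.append w 0)

theorem phi_eq_d_iff (hG : IsGluing A₁ A₂ d) (hUP : UniquelyPresented (Fin.append A₁ A₂))
    {δ₁ : Fin r₁ → ℕ} {δ₂ : Fin r₂ → ℕ} (hδ₁ : phi A₁ δ₁ = d) (hδ₂ : phi A₂ δ₂ = d)
    (w : Fin (r₁ + r₂) → ℕ) :
    phi (Fin.append A₁ A₂) w = d ↔ w = Fin.append δ₁ 0 ∨ w = Fin.append 0 δ₂ :=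
  ((hUP d hG.isBetti_d).phi_eq_iff (by rw [phi_append_zero, hδ₁]) (by rw [phi_zero_append, hδ₂])
    fun h => ne_zero_of_phi_eq hδ₁ hG.ne_zero (append_inj.1 h).1).1 w

/-- If `d = a + phi w`, then `u + w` and `v + w` are two distinct factorizations of `d`, so one of
them is `(0, δ₂)`; but `a ≠ 0`. -/
theorem d_sub_notMem_of_isBetti_left (hG : IsGluing A₁ A₂ d)
    (hUP : UniquelyPresented (Fin.append A₁ A₂)) (ha : IsBetti A₁ a) :
    d - a ∉ AddSubmonoid.closure (Set.range (Fin.append A₁ A₂)) := by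
  obtain ⟨u, v, hu, hv, huv⟩ := ha
  have huv' : u ≠ v := fun h => huv (h ▸ .refl)
  obtain ⟨δ₁, hδ₁⟩ := hG.exists_phi_left_eq
  obtain ⟨δ₂, hδ₂⟩ := hG.exists_phi_right_eq
  rw [mem_closure_range_iff_exists_phi]
  rintro ⟨w, hw⟩
  obtain ⟨x, y, rfl⟩ := exists_eq_append w
  have hfac : ∀ t, phi A₁ t = a → phi (Fin.append A₁ A₂) (Fin.append (t + x) y) = d :=
    fun t ht => by rw [phi_append, phi_add, ht, add_assoc, ← phi_append, hw, add_sub_cancel]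
  have hzero : ∀ t, phi A₁ t = a → t + x ≠ 0 := fun t ht h0 => huv' <| by
    have ha : a = 0 := by rw [← ht, (add_eq_zero.1 h0).1, phi_zero]
    rw [hG.phi_left_eq_zero (hu.trans ha), hG.phi_left_eq_zero (hv.trans ha)]
  have hd := hG.phi_eq_d_iff hUP hδ₁ hδ₂
  rcases (hd _).1 (hfac u hu) with h₁ | h₁ <;> rcases (hd _).1 (hfac v hv) with h₂ | h₂ <;>
    simp only [append_inj] at h₁ h₂
  · exact huv' (add_right_cancel (h₁.1.trans h₂.1.symm))
  · exact hzero v hv h₂.1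
  · exact hzero u hu h₁.1
  · exact hzero u hu h₁.1

theorem sub_d_notMem_of_isBetti_left (hG : IsGluing A₁ A₂ d)
    (hUP : UniquelyPresented (Fin.append A₁ A₂)) (ha : IsBetti A₁ a) :
    a - d ∉ AddSubmonoid.closure (Set.range (Fin.append A₁ A₂)) := by
  obtain ⟨u, v, hu, hv, huv⟩ := ha
  obtain ⟨hfib, -⟩ := hG.phi_eq_iff_of_not_rrel_left hUP hu hv huv
  obtain ⟨δ₂, hδ₂⟩ := hG.exists_phi_right_eq
  rw [mem_closure_range_iff_exists_phi]
  rintro ⟨w, hw⟩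
  obtain ⟨x, y, rfl⟩ := exists_eq_append w
  have h := (hfib (Fin.append x (y + δ₂))).1
    (by rw [phi_append, phi_add, hδ₂, ← add_assoc, ← phi_append, hw, sub_add_cancel])
  simp only [append_inj] at h
  obtain h | h := h <;> exact ne_zero_of_phi_eq hδ₂ hG.ne_zero (add_eq_zero.1 h.2).2

theorem hasUniquePres_of_isBetti_left (hG : IsGluing A₁ A₂ d) (h₁ : UniquelyPresented A₁)
    (had : a - d ∉ AddSubmonoid.closure (Set.range (Fin.append A₁ A₂))) (ha : IsBetti A₁ a) :
    HasUniquePres (Fin.append A₁ A₂) a := by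
  obtain ⟨u, v, huv, hfib, hdot⟩ := hasUniquePres_iff.1 (h₁ a ha)
  obtain ⟨δ, hδ⟩ := hG.exists_phi_left_eq
  have hu : phi A₁ u = a := (hfib u).2 (.inl rfl)
  have hv : phi A₁ v = a := (hfib v).2 (.inr rfl)
  refine hasUniquePres_iff.2 ⟨Fin.append u 0, Fin.append v 0, fun h => huv (append_inj.1 h).1,
    fun w => ?_, by simpa [sum_mul_append] using hdot⟩
  obtain ⟨x, y, rfl⟩ := exists_eq_append w
  refine ⟨fun h => ?_, ?_⟩
  · obtain ⟨k, hy, hx⟩ := hG.exists_nsmul_of_phi_eq hu h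
    cases k with
    | zero =>
      rw [zero_smul] at hy hx
      rw [add_zero] at hx
      simpa [append_inj, hG.phi_right_eq_zero hy] using (hfib x).1 hx
    | succ k =>
      refine absurd (mem_closure_range_iff_exists_phi.2 ⟨Fin.append (x + k • δ) 0, ?_⟩) had
      rw [phi_append, phi_zero, add_zero, phi_add, phi_nsmul, hδ, ← hx, succ_nsmul]
      abel
  · rintro (h | h) <;> obtain ⟨rfl, rfl⟩ := append_inj.1 h <;>
      simp [phi_append, phi_zero, hu, hv]

theorem hasUniquePres_d (hG : IsGluing A₁ A₂ d)
    (hc : ∀ b, IsBetti A₁ b ∨ IsBetti A₂ b →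
      d - b ∉ AddSubmonoid.closure (Set.range (Fin.append A₁ A₂))) :
    HasUniquePres (Fin.append A₁ A₂) d := by
  obtain ⟨δ₁, hδ₁⟩ := hG.exists_phi_left_eq
  obtain ⟨δ₂, hδ₂⟩ := hG.exists_phi_right_eq
  have h₁ : ∀ w, phi A₁ w = d → w = δ₁ := fun w hw =>
    eq_of_phi_eq_of_forall_isBetti (fun b w' hb hbw => hc b (.inl hb) <| by
      rw [← hbw, add_sub_cancel_left]; exact phi_left_mem_closure _ _ _) hw hδ₁
  have h₂ : ∀ w, phi A₂ w = d → w = δ₂ := fun w hw =>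
    eq_of_phi_eq_of_forall_isBetti (fun b w' hb hbw => hc b (.inr hb) <| by
      rw [← hbw, add_sub_cancel_left]; exact phi_right_mem_closure _ _ _) hw hδ₂
  refine hasUniquePres_iff.2 ⟨Fin.append δ₁ 0, Fin.append 0 δ₂,
    fun h => ne_zero_of_phi_eq hδ₁ hG.ne_zero (append_inj.1 h).1, fun w => ?_,
    by simp [sum_mul_append]⟩
  obtain ⟨x, y, rfl⟩ := exists_eq_append w
  refine ⟨fun h => ?_, ?_⟩
  · rcases hG.cases_of_phi_eq_d h with ⟨rfl, hx⟩ | ⟨rfl, hy⟩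
    · exact .inl (by rw [h₁ x hx])
    · exact .inr (by rw [h₂ y hy])
  · rintro (h | h) <;> obtain ⟨rfl, rfl⟩ := append_inj.1 h <;>
      simp [phi_append, phi_zero, hδ₁, hδ₂]

end IsGluing

end Gluing

theorem stmt9_general {n r₁ r₂ : ℕ} (A₁ : Fin r₁ → (Fin n → ℤ)) (A₂ : Fin r₂ → (Fin n → ℤ))
    (hmin : ∀ i : Fin (r₁ + r₂), ¬ ∃ u : Fin (r₁ + r₂) → ℕ,
      u i = 0 ∧ phi (Fin.append A₁ A₂) u = Fin.append A₁ A₂ i)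
    (hred : ∀ x ∈ AddSubmonoid.closure (Set.range (Fin.append A₁ A₂)),
      -x ∈ AddSubmonoid.closure (Set.range (Fin.append A₁ A₂)) → x = 0)
    (d : Fin n → ℤ) (hd0 : d ≠ 0)
    (hd1 : d ∈ AddSubmonoid.closure (Set.range A₁))
    (hd2 : d ∈ AddSubmonoid.closure (Set.range A₂))
    (hglue : AddSubgroup.closure (Set.range A₁) ⊓ AddSubgroup.closure (Set.range A₂)
      = AddSubgroup.zmultiples d) :
    UniquelyPresented (Fin.append A₁ A₂) ↔
      (UniquelyPresented A₁ ∧ UniquelyPresented A₂ ∧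
        ∀ a : Fin n → ℤ, (IsBetti A₁ a ∨ IsBetti A₂ a) →
          d - a ∉ AddSubmonoid.closure (Set.range (Fin.append A₁ A₂)) ∧
          a - d ∉ AddSubmonoid.closure (Set.range (Fin.append A₁ A₂))) := by
  have hG : IsGluing A₁ A₂ d :=
    ⟨fun _ => eq_zero_of_phi_eq_zero (fun i hi => hmin i ⟨0, rfl, by rw [phi_zero, hi]⟩) hred,
      hd0, hd1, hd2, hglue⟩
  constructor
  · intro hUP
    have hUP' := uniquelyPresented_append_comm.2 hUP
    refine ⟨hG.uniquelyPresented_left hUP, hG.symm.uniquelyPresented_left hUP', ?_⟩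
    rintro a (ha | ha)
    · exact ⟨hG.d_sub_notMem_of_isBetti_left hUP ha, hG.sub_d_notMem_of_isBetti_left hUP ha⟩
    · rw [← range_append_comm]
      exact ⟨hG.symm.d_sub_notMem_of_isBetti_left hUP' ha,
        hG.symm.sub_d_notMem_of_isBetti_left hUP' ha⟩
  · rintro ⟨h₁, h₂, hc⟩ a ha
    rcases hG.isBetti_cases ha with ha | ha | rfl
    · exact hG.hasUniquePres_of_isBetti_left h₁ (hc a (.inl ha)).2 ha
    · refine (hG.symm.hasUniquePres_of_isBetti_left h₂ ?_ ha).of_append_comm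
      rw [range_append_comm]
      exact (hc a (.inr ha)).2
    · exact hG.hasUniquePres_d fun b hb => (hc b hb).1

/-- If `S` is the gluing of `S₁` and `S₂` with `G(S₁) ∩ G(S₂) = dℤ`, then `S` is uniquely
presented iff `S₁` and `S₂` are uniquely presented and `±(d - a) ∉ S` for every
`a ∈ Betti(S₁) ∪ Betti(S₂)`. -/
theorem stmt9 {n r₁ r₂ : ℕ} (A₁ : Fin r₁ → (Fin n → ℤ)) (A₂ : Fin r₂ → (Fin n → ℤ))
    (hdisj : Disjoint (Set.range A₁) (Set.range A₂))
    (hmin : ∀ i : Fin (r₁ + r₂), ¬ ∃ u : Fin (r₁ + r₂) → ℕ,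
      u i = 0 ∧ phi (Fin.append A₁ A₂) u = Fin.append A₁ A₂ i)
    (hred : ∀ x ∈ AddSubmonoid.closure (Set.range (Fin.append A₁ A₂)),
      -x ∈ AddSubmonoid.closure (Set.range (Fin.append A₁ A₂)) → x = 0)
    (d : Fin n → ℤ) (hd0 : d ≠ 0)
    (hd1 : d ∈ AddSubmonoid.closure (Set.range A₁))
    (hd2 : d ∈ AddSubmonoid.closure (Set.range A₂))
    (hglue : AddSubgroup.closure (Set.range A₁) ⊓ AddSubgroup.closure (Set.range A₂)
      = AddSubgroup.zmultiples d) :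
    UniquelyPresented (Fin.append A₁ A₂) ↔
      (UniquelyPresented A₁ ∧ UniquelyPresented A₂ ∧
        ∀ a : Fin n → ℤ, (IsBetti A₁ a ∨ IsBetti A₂ a) →
          d - a ∉ AddSubmonoid.closure (Set.range (Fin.append A₁ A₂)) ∧
          a - d ∉ AddSubmonoid.closure (Set.range (Fin.append A₁ A₂))) :=
  stmt9_general A₁ A₂ hmin hred d hd0 hd1 hd2 hglue
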